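/- Let X and Y be metric spaces and f a multifunction from X to Y such that f x is a compact subset of Y for every x ∈ X. If f is strongly continuous, then f is semi-uniformly strongly continuous. -/
import Mathlib


/-- If a pointwise compact multifunction between metric spaces is strongly continuous,
then it is semi-uniformly strongly continuous. -/
theorem strong_implies_semiUniformStrong {X Y : Type*} [MetricSpace X] [MetricSpace Y]
    (f : X → Set Y) (hcpt : ∀ x : X, IsCompact (f x))
    (hsc : ∀ x, (f x).Nonempty → ∀ y ∈ f x, ∀ ε > (0:ℝ), ∃ δ > (0:ℝ),
      ∀ x', (f x').Nonempty → dist x x' < δ → ∃ y' ∈ f x', dist y y' < ε) :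
    ∀ ε > (0:ℝ), ∀ x, (f x).Nonempty → ∃ δ > (0:ℝ), ∀ y ∈ f x,
      ∀ x', (f x').Nonempty → dist x x' < δ → ∃ y' ∈ f x', dist y y' < ε := by
  intro ε hε x hx
  have hε2 : (0:ℝ) < ε / 2 := by linarith
  -- choose δ for each y ∈ f x
  have hchoice : ∀ y ∈ f x, ∃ δ > (0:ℝ),
      ∀ x', (f x').Nonempty → dist x x' < δ → ∃ y' ∈ f x', dist y y' < ε / 2 :=
    fun y hy => hsc x hx y hy (ε/2) hε2
  choose! δy hδy hprop using hchoice
  -- cover f x by balls of radius ε/2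
  obtain ⟨t, hts, htcover⟩ := (hcpt x).elim_nhds_subcover
    (fun y => Metric.ball y (ε/2))
    (fun y hy => Metric.ball_mem_nhds y hε2)
  by_cases ht : t.Nonempty
  · refine ⟨t.inf' ht (fun y => δy y), ?_, ?_⟩
    · exact (Finset.lt_inf'_iff ht).2 fun y hy => hδy y (hts y hy)
    · intro y hy x' hx' hdist
      obtain ⟨z, hz, hyz⟩ := Set.mem_iUnion₂.1 (htcover hy)
      have hzfx : z ∈ f x := hts z hz
      have hdz : dist x x' < δy z :=
        lt_of_lt_of_le hdist (Finset.inf'_le _ hz)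
      obtain ⟨y', hy', hdy'⟩ := hprop z hzfx x' hx' hdz
      refine ⟨y', hy', ?_⟩
      have : dist y z < ε/2 := Metric.mem_ball.1 hyz
      calc dist y y' ≤ dist y z + dist z y' := dist_triangle _ _ _
        _ < ε/2 + ε/2 := by exact add_lt_add this hdy'
        _ = ε := by ring
  · -- t empty: then f x ⊆ ∅, contradicting nonempty
    exfalso
    obtain ⟨y, hy⟩ := hx
    obtain ⟨z, hz, _⟩ := Set.mem_iUnion₂.1 (htcover hy)
    exact ht ⟨z, hz⟩
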